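/- arXiv:2207.06687 — 3 statements merged into one kernel-verified Lean document; each statement's English description precedes it below -/
import Mathlib

section
/- For the empirical risk R_emp and population risk R_pop, sup over all Q with Q_Y=P_Y and Q_{X|Y,Z}=P_{X|Y,Z} of |R_emp(f,P) − R_pop(f,Q)| is at most |R_emp(f,P) − R_pop(f,P)| + CSV(f). -/
/-! Since `Q` and `P` share the law of `X` given `(Y, Z)`, conditioning on `(Y, Z)` writes both
population risks as `∑ y, ∑ z, R_{Y,Z}(y, z) * L y z` with the same conditional risks `L`. For
each `y` the weights `P_{Y,Z}(y, ·)` and `Q_{Y,Z}(y, ·)` have the same total `P_Y(y)`, so the two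
weighted sums of `L y ·` differ by at most `P_Y(y)` times the oscillation of `L y ·`. The triangle
inequality through `R_pop(f, P)` concludes. -/

namespace PMF

variable {α β γ : Type*}

lemma map_fst_apply (R : PMF (α × β)) (a : α) : R.map Prod.fst a = ∑' b, R (a, b) := by
  rw [map_apply, ENNReal.tsum_prod']
  refine (tsum_eq_single a fun a' ha' => ?_).trans (tsum_congr fun b => if_pos rfl)
  exact ENNReal.tsum_eq_zero.mpr fun b => if_neg fun h => ha' h.symm

lemma map_snd_fst_apply [Fintype γ] (R : PMF (α × β × γ)) (b : β) :
    R.map (fun p => p.2.1) b = ∑ c, R.map (fun p => p.2) (b, c) := by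
  rw [show (fun p : α × β × γ => p.2.1) = Prod.fst ∘ fun p => p.2 from rfl, ← map_comp,
    map_fst_apply, tsum_fintype]

lemma summable_toReal (R : PMF α) : Summable fun a => (R a).toReal :=
  ENNReal.summable_toReal (by rw [R.tsum_coe]; exact ENNReal.one_ne_top)

lemma summable_toReal_mul (R : PMF α) {g : α → ℝ} {C : ℝ} (hg : ∀ a, ‖g a‖ ≤ C) :
    Summable fun a => (R a).toReal * g a :=
  (R.summable_toReal.mul_right C).of_norm_bounded fun a => by
    rw [norm_mul, Real.norm_of_nonneg ENNReal.toReal_nonneg]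
    exact mul_le_mul_of_nonneg_left (hg a) ENNReal.toReal_nonneg

lemma tsum_toReal_mul_fiber_eq (P Q : PMF (α × β)) (b : β) (h : α → ℝ)
    (hPb : P.map (fun p => p.2) b ≠ 0)
    (hPQ : ∀ a, P (a, b) * Q.map (fun p => p.2) b = Q (a, b) * P.map (fun p => p.2) b) :
    ∑' a, (Q (a, b)).toReal * h a
      = (Q.map (fun p => p.2) b).toReal
          * ((∑' a, (P (a, b)).toReal * h a) / (P.map (fun p => p.2) b).toReal) := by
  have hPb' : (P.map (fun p => p.2) b).toReal ≠ 0 :=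
    ENNReal.toReal_ne_zero.mpr ⟨hPb, apply_ne_top _ _⟩
  have hQa : ∀ a, (Q (a, b)).toReal = (Q.map (fun p => p.2) b).toReal
      / (P.map (fun p => p.2) b).toReal * (P (a, b)).toReal := fun a => by
    rw [div_mul_eq_mul_div, eq_div_iff hPb', mul_comm _ (P _).toReal, ← ENNReal.toReal_mul,
      ← ENNReal.toReal_mul, hPQ]
  simp_rw [hQa, mul_assoc, tsum_mul_left]
  ring

end PMF

lemma Summable.tsum_prod_eq_sum_tsum {α β : Type*} [Fintype β] {F : α × β → ℝ}
    (hF : Summable F) : ∑' p, F p = ∑ b, ∑' a, F (a, b) := by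
  rw [← (Equiv.prodComm β α).tsum_eq]
  exact hF.prod_symm.tsum_prod.trans (tsum_fintype _)

lemma PMF.tsum_toReal_mul_eq_sum_mul {α β : Type*} [Fintype β] (P Q : PMF (α × β))
    {g : α × β → ℝ} {C : ℝ} (hg : ∀ p, ‖g p‖ ≤ C) (hP : ∀ b, P.map (fun p => p.2) b ≠ 0)
    (hPQ : ∀ a b, P (a, b) * Q.map (fun p => p.2) b = Q (a, b) * P.map (fun p => p.2) b) :
    ∑' p, (Q p).toReal * g p
      = ∑ b, (Q.map (fun p => p.2) b).toReal
          * ((∑' a, (P (a, b)).toReal * g (a, b)) / (P.map (fun p => p.2) b).toReal) := by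
  rw [(Q.summable_toReal_mul hg).tsum_prod_eq_sum_tsum]
  exact Finset.sum_congr rfl fun b _ =>
    P.tsum_toReal_mul_fiber_eq Q b (fun a => g (a, b)) (hP b) (hPQ · b)

section Oscillation

variable {ι κ : Type*} [Fintype κ] [Nonempty κ]

lemma sum_mul_sub_sum_mul_le_mul_iSup_sub {a b : κ → ℝ} (ha : ∀ k, 0 ≤ a k)
    (hb : ∀ k, 0 ≤ b k) (hab : ∑ k, a k = ∑ k, b k) (L : κ → ℝ) :
    ∑ k, a k * L k - ∑ k, b k * L k ≤ (∑ k, a k) * ⨆ k₁, ⨆ k₂, (L k₁ - L k₂) := by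
  obtain ⟨kmax, hkmax⟩ := Finite.exists_max L
  obtain ⟨kmin, hkmin⟩ := Finite.exists_min L
  have hupper : ∑ k, a k * L k ≤ (∑ k, a k) * L kmax := by
    rw [Finset.sum_mul]
    exact Finset.sum_le_sum fun k _ => mul_le_mul_of_nonneg_left (hkmax k) (ha k)
  have hlower : (∑ k, a k) * L kmin ≤ ∑ k, b k * L k := by
    rw [hab, Finset.sum_mul]
    exact Finset.sum_le_sum fun k _ => mul_le_mul_of_nonneg_left (hkmin k) (hb k)
  have hosc : (∑ k, a k) * (L kmax - L kmin) ≤ (∑ k, a k) * ⨆ k₁, ⨆ k₂, (L k₁ - L k₂) :=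
    mul_le_mul_of_nonneg_left
      (le_ciSup_of_le (Set.finite_range _).bddAbove kmax
        (le_ciSup (f := fun k₂ => L kmax - L k₂) (Set.finite_range _).bddAbove kmin))
      (Finset.sum_nonneg fun k _ => ha k)
  linarith

lemma abs_sum_sum_mul_sub_sum_sum_mul_le [Fintype ι] {a b : ι → κ → ℝ}
    (ha : ∀ i k, 0 ≤ a i k) (hb : ∀ i k, 0 ≤ b i k) (hab : ∀ i, ∑ k, a i k = ∑ k, b i k)
    (L : ι → κ → ℝ) :
    |∑ i, ∑ k, a i k * L i k - ∑ i, ∑ k, b i k * L i k|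
      ≤ ∑ i, (∑ k, a i k) * ⨆ k₁, ⨆ k₂, (L i k₁ - L i k₂) := by
  rw [← Finset.sum_sub_distrib]
  refine (Finset.abs_sum_le_sum_abs _ _).trans (Finset.sum_le_sum fun i _ => ?_)
  rw [abs_sub_le_iff]
  refine ⟨sum_mul_sub_sum_mul_le_mul_iSup_sub (ha i) (hb i) (hab i) (L i), ?_⟩
  rw [hab i]
  exact sum_mul_sub_sum_mul_le_mul_iSup_sub (hb i) (ha i) (hab i).symm (L i)

end Oscillation

theorem stmt2_general {𝒳 𝒴 𝒵 Ω : Type*} [Fintype 𝒴] [Fintype 𝒵] [Nonempty 𝒵]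
    (P Q : PMF (𝒳 × 𝒴 × 𝒵)) (f : 𝒳 → Ω) (𝓛 : Ω → 𝒴 → ℝ) (M : ℝ)
    (hnonneg : ∀ w y, 0 ≤ 𝓛 w y) (hbound : ∀ w y, 𝓛 w y ≤ M)
    (hpos : ∀ y z, 0 < (P.map (fun p => p.2)) (y, z))
    -- Q_Y = P_Y
    (hY : P.map (fun p => p.2.1) = Q.map (fun p => p.2.1))
    -- Q_{X∣Y,Z} = P_{X∣Y,Z} (in cross-multiplied form)
    (hXYZ : ∀ x y z,
      P (x, y, z) * (Q.map (fun p => p.2)) (y, z)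
        = Q (x, y, z) * (P.map (fun p => p.2)) (y, z))
    (Remp : ℝ)
    -- L y z = E[𝓛(f(X),Y) ∣ Y = y, Z = z]
    (L : 𝒴 → 𝒵 → ℝ)
    (hL : ∀ y z, L y z
      = (∑' x : 𝒳, (P (x, y, z)).toReal * 𝓛 (f x) y)
          / ((P.map (fun p => p.2)) (y, z)).toReal) :
    |Remp - ∑' p : 𝒳 × 𝒴 × 𝒵, (Q p).toReal * 𝓛 (f p.1) p.2.1|
      ≤ |Remp - ∑' p : 𝒳 × 𝒴 × 𝒵, (P p).toReal * 𝓛 (f p.1) p.2.1|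
        + ∑ y : 𝒴, ((P.map (fun p => p.2.1)) y).toReal
            * ⨆ z₁ : 𝒵, ⨆ z₂ : 𝒵, (L y z₁ - L y z₂) := by
  have hloss : ∀ p : 𝒳 × 𝒴 × 𝒵, ‖𝓛 (f p.1) p.2.1‖ ≤ M := fun p => by
    rw [Real.norm_of_nonneg (hnonneg _ _)]
    exact hbound _ _
  have hrisk : ∀ R : PMF (𝒳 × 𝒴 × 𝒵),
      (∀ x w, P (x, w) * R.map (fun p => p.2) w = R (x, w) * P.map (fun p => p.2) w) →
      ∑' p, (R p).toReal * 𝓛 (f p.1) p.2.1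
        = ∑ y, ∑ z, (R.map (fun p => p.2) (y, z)).toReal * L y z := fun R hR => by
    rw [P.tsum_toReal_mul_eq_sum_mul R hloss (fun w => (hpos w.1 w.2).ne') hR,
      Fintype.sum_prod_type]
    simp only [hL]
  have hrow : ∀ R : PMF (𝒳 × 𝒴 × 𝒵), ∀ y,
      ((R.map (fun p => p.2.1)) y).toReal = ∑ z, (R.map (fun p => p.2) (y, z)).toReal :=
    fun R y => by rw [R.map_snd_fst_apply, ENNReal.toReal_sum fun z _ => PMF.apply_ne_top _ _]
  have hPQ : |∑' p, (P p).toReal * 𝓛 (f p.1) p.2.1 - ∑' p, (Q p).toReal * 𝓛 (f p.1) p.2.1|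
      ≤ ∑ y, ((P.map (fun p => p.2.1)) y).toReal * ⨆ z₁, ⨆ z₂, (L y z₁ - L y z₂) := by
    rw [hrisk P fun _ _ => rfl, hrisk Q fun x w => hXYZ x w.1 w.2]
    simp only [hrow P]
    exact abs_sum_sum_mul_sub_sum_sum_mul_le (fun _ _ => ENNReal.toReal_nonneg)
      (fun _ _ => ENNReal.toReal_nonneg) (fun y => by rw [← hrow, ← hrow, hY]) L
  linarith [abs_sub_le Remp (∑' p, (P p).toReal * 𝓛 (f p.1) p.2.1)
    (∑' p, (Q p).toReal * 𝓛 (f p.1) p.2.1)]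

/-- for every `Q` with `Q_Y = P_Y` and `Q_{X∣Y,Z} = P_{X∣Y,Z}`,
`|R_emp(f,P) − R_pop(f,Q)| ≤ |R_emp(f,P) − R_pop(f,P)| + CSV(f)`;
i.e. the supremum over such `Q` of the OOD generalization error is bounded by
the in-distribution generalization error plus the CSV. -/
theorem stmt2 {𝒳 𝒴 𝒵 Ω : Type*} [Fintype 𝒴] [Fintype 𝒵] [Nonempty 𝒵]
    (P Q : PMF (𝒳 × 𝒴 × 𝒵)) (f : 𝒳 → Ω) (𝓛 : Ω → 𝒴 → ℝ) (M : ℝ)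
    (hnonneg : ∀ w y, 0 ≤ 𝓛 w y) (hbound : ∀ w y, 𝓛 w y ≤ M)
    (hpos : ∀ y z, 0 < (P.map (fun p => p.2)) (y, z))
    -- Q_Y = P_Y
    (hY : P.map (fun p => p.2.1) = Q.map (fun p => p.2.1))
    -- Q_{X∣Y,Z} = P_{X∣Y,Z} (in cross-multiplied form)
    (hXYZ : ∀ x y z,
      P (x, y, z) * (Q.map (fun p => p.2)) (y, z)
        = Q (x, y, z) * (P.map (fun p => p.2)) (y, z))
    -- n training samples, giving the empirical risk
    (n : ℕ) (hn : 0 < n) (sample : Fin n → 𝒳 × 𝒴)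
    (Remp : ℝ)
    (hRemp : Remp = (∑ i : Fin n, 𝓛 (f (sample i).1) (sample i).2) / n)
    -- L y z = E[𝓛(f(X),Y) ∣ Y = y, Z = z]
    (L : 𝒴 → 𝒵 → ℝ)
    (hL : ∀ y z, L y z
      = (∑' x : 𝒳, (P (x, y, z)).toReal * 𝓛 (f x) y)
          / ((P.map (fun p => p.2)) (y, z)).toReal) :
    |Remp - ∑' p : 𝒳 × 𝒴 × 𝒵, (Q p).toReal * 𝓛 (f p.1) p.2.1|
      ≤ |Remp - ∑' p : 𝒳 × 𝒴 × 𝒵, (P p).toReal * 𝓛 (f p.1) p.2.1|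
        + ∑ y : 𝒴, ((P.map (fun p => p.2.1)) y).toReal
            * ⨆ z₁ : 𝒵, ⨆ z₂ : 𝒵, (L y z₁ - L y z₂) :=
  stmt2_general P Q f 𝓛 M hnonneg hbound hpos hY hXYZ Remp L hL
end

section
/- Let V be a real random variable with distribution P = Σ_{k=1}^{K} π_k P_k, where each P_k is absolutely continuous with respect to Lebesgue measure and π_k ≥ c > 0 for all k. Then E_P[V | V ≥ q_P(1−c)] − E_P[V | V ≤ q_P(c)] ≥ max_k E_{P_k}[V] − min_k E_{P_k}[V], where q_P(s) = inf{p : P(V ≤ p) ≥ s} is the quantile function. -/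
/-!
Scaled by `c`, every component is a sub-measure `c • P_k ≤ P` of mass `c`. Since `P` is atomless,
the tails `{V ≥ q(1 - c)}` and `{V ≤ q(c)}` also have `P`-mass exactly `c`, and among sub-measures
of `P` of a given mass the upper tail carries the largest integral of `V` and the lower tail the
smallest (bathtub principle). Hence `c • E_k[V]` lies between the two tail integrals for every `k`.
When `c = 1` there is a single component, so the left side is `0`; the right side is nonnegative
because of the junk values `q 0 = sInf univ = 0` and `q 1 ∈ {0} ∪ {t | P (V ≤ t) = 1}`.
-/

open MeasureTheory ProbabilityTheory Set Filter
open scoped ENNReal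

theorem integral_le_setIntegral_of_measureReal_eq {α : Type*} [MeasurableSpace α]
    {μ P : Measure α} [IsFiniteMeasure P] (hμ : μ ≤ P) {s : Set α} (hs : MeasurableSet s)
    (hmass : μ.real univ = P.real s) {f : α → ℝ} (hf : Integrable f P) {t : ℝ}
    (hfs : ∀ x ∈ s, t ≤ f x) (hfsc : ∀ x ∉ s, f x ≤ t) :
    ∫ x, f x ∂μ ≤ ∫ x in s, f x ∂P := by
  have : IsFiniteMeasure μ := isFiniteMeasure_of_le P hμ
  have hft : Integrable (fun x => f x - t) P := hf.sub (integrable_const t)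
  have hg : Integrable (s.indicator fun x => f x - t) P := hft.indicator hs
  calc ∫ x, f x ∂μ = ∫ x, (f x - t) ∂μ + μ.real univ * t := by
        rw [integral_sub (hf.mono_measure hμ) (integrable_const t), integral_const, smul_eq_mul]
        ring
    _ ≤ ∫ x, s.indicator (fun x => f x - t) x ∂μ + μ.real univ * t := by
        refine add_le_add
          (integral_mono (hft.mono_measure hμ) (hg.mono_measure hμ) fun x => ?_) le_rfl
        by_cases hx : x ∈ s
        · simp [hx]
        · simpa [hx] using hfsc x hx
    _ ≤ ∫ x, s.indicator (fun x => f x - t) x ∂P + P.real s * t := by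
        rw [hmass]
        refine add_le_add (integral_mono_measure hμ (ae_of_all _ fun x => ?_) hg) le_rfl
        by_cases hx : x ∈ s
        · simpa [hx] using hfs x hx
        · simp [hx]
    _ = ∫ x in s, f x ∂P := by
        rw [integral_indicator hs, integral_sub hf.integrableOn (integrable_const t),
          setIntegral_const, smul_eq_mul]
        ring

noncomputable def upperTailMean (μ : Measure ℝ) (t : ℝ) : ℝ :=
  (∫ v in Ici t, v ∂μ) / μ.real (Ici t)

noncomputable def lowerTailMean (μ : Measure ℝ) (t : ℝ) : ℝ :=
  (∫ v in Iic t, v ∂μ) / μ.real (Iic t)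

section TailMean

variable {P ν : Measure ℝ} [IsFiniteMeasure P] [IsProbabilityMeasure ν] {c t : ℝ}

theorem integral_le_upperTailMean (hc : 0 < c) (hle : ENNReal.ofReal c • ν ≤ P)
    (hmass : P.real (Ici t) = c) (hP : Integrable id P) : ∫ v, v ∂ν ≤ upperTailMean P t := by
  have h := integral_le_setIntegral_of_measureReal_eq hle measurableSet_Ici
    (by simp [hmass, hc.le]) hP (t := t) (fun _ hv => hv) fun _ hv => (not_le.1 hv).le
  rw [integral_smul_measure, ENNReal.toReal_ofReal hc.le, smul_eq_mul] at h
  rwa [upperTailMean, hmass, le_div_iff₀' hc]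

theorem lowerTailMean_le_integral (hc : 0 < c) (hle : ENNReal.ofReal c • ν ≤ P)
    (hmass : P.real (Iic t) = c) (hP : Integrable id P) : lowerTailMean P t ≤ ∫ v, v ∂ν := by
  have h := integral_le_setIntegral_of_measureReal_eq hle measurableSet_Iic
    (by simp [hmass, hc.le]) hP.neg (t := -t) (fun _ hv => neg_le_neg hv)
    fun _ hv => neg_le_neg (not_le.1 hv).le
  rw [integral_smul_measure, ENNReal.toReal_ofReal hc.le, smul_eq_mul] at h
  simp only [Pi.neg_apply, id_eq] at h
  rw [integral_neg, integral_neg] at h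
  rw [lowerTailMean, hmass, div_le_iff₀' hc]
  linarith

end TailMean

theorem lowerTailMean_le_upperTailMean_zero (μ : Measure ℝ) [IsProbabilityMeasure μ]
    (hint : Integrable id μ) {u : ℝ} (hu : u ≤ 0 ∨ μ.real (Iic u) = 1) :
    lowerTailMean μ u ≤ upperTailMean μ 0 := by
  have hA : 0 ≤ ∫ v in Ici 0, v ∂μ := setIntegral_nonneg measurableSet_Ici fun _ hv => hv
  rcases hu with hu | hu
  · exact (div_nonpos_of_nonpos_of_nonneg
      (setIntegral_nonpos measurableSet_Iic fun _ hv => le_trans hv hu) measureReal_nonneg).trans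
      (div_nonneg hA measureReal_nonneg)
  have hnull : μ (Iic u)ᶜ = 0 := by
    rw [← measureReal_eq_zero_iff, probReal_compl_eq_one_sub measurableSet_Iic, hu, sub_self]
  have hfull : ∫ v in Iic u, v ∂μ = ∫ v, v ∂μ := by
    rw [← integral_add_compl (f := fun v => v) measurableSet_Iic hint,
      setIntegral_measure_zero _ hnull, add_zero]
  have hmean : ∫ v, v ∂μ ≤ ∫ v in Ici 0, v ∂μ := by
    rw [← integral_add_compl (f := fun v => v) measurableSet_Ici hint, compl_Ici]
    linarith [setIntegral_nonpos (μ := μ) measurableSet_Iio fun v (hv : v < 0) => hv.le]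
  rw [lowerTailMean, upperTailMean, hu, div_one, hfull]
  rcases measureReal_nonneg.eq_or_lt with h0 | hpos
  · rw [← h0, div_zero]
    exact hmean.trans_eq (setIntegral_measure_zero _ ((measureReal_eq_zero_iff).1 h0.symm))
  · exact hmean.trans (le_div_self hA hpos measureReal_le_one)

section SuperlevelSet

variable {f : ℝ → ℝ} {s x : ℝ}

theorem Monotone.mem_lowerBounds_setOf_le (hmono : Monotone f) (hx : f x < s) :
    x ∈ lowerBounds {p | s ≤ f p} := fun _ hp =>
  le_of_not_gt fun hpx => (hx.trans_le hp).not_ge (hmono hpx.le)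

theorem Monotone.le_apply_sInf_setOf_le (hmono : Monotone f) (hcont : Continuous f)
    (hx : f x < s) (hne : {p | s ≤ f p}.Nonempty) : s ≤ f (sInf {p | s ≤ f p}) :=
  (isClosed_le continuous_const hcont).csInf_mem hne ⟨x, hmono.mem_lowerBounds_setOf_le hx⟩

theorem Monotone.apply_sInf_setOf_le (hmono : Monotone f) (hcont : Continuous f)
    (hx : f x < s) (hne : {p | s ≤ f p}.Nonempty) : f (sInf {p | s ≤ f p}) = s := by
  have hlb := hmono.mem_lowerBounds_setOf_le hx
  obtain ⟨p, ⟨-, hpb⟩, hfp⟩ := intermediate_value_Icc (le_csInf hne hlb) hcont.continuousOn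
    ⟨hx.le, hmono.le_apply_sInf_setOf_le hcont hx hne⟩
  rwa [le_antisymm hpb (csInf_le ⟨x, hlb⟩ hfp.ge)] at hfp

end SuperlevelSet

theorem MeasureTheory.Measure.AbsolutelyContinuous.nullSingletonClass {α : Type*}
    [MeasurableSpace α] {μ ν : Measure α} [NullSingletonClass ν] (h : μ ≪ ν) :
    NullSingletonClass μ :=
  ⟨fun x => h (measure_singleton x)⟩

theorem ProbabilityTheory.continuous_cdf (μ : Measure ℝ) [IsProbabilityMeasure μ]
    [NullSingletonClass μ] : Continuous (cdf μ) := by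
  refine continuous_iff_continuousAt.2 fun x => ?_
  have hjump := (cdf μ).measure_singleton x
  rw [measure_cdf, measure_singleton, eq_comm, ENNReal.ofReal_eq_zero, sub_nonpos] at hjump
  have hleft : Function.leftLim (cdf μ) x = cdf μ x :=
    le_antisymm ((cdf μ).mono.leftLim_le le_rfl) hjump
  exact continuousAt_iff_continuous_left_right.2
    ⟨continuousWithinAt_Iio_iff_Iic.1 ((cdf μ).mono.continuousWithinAt_Iio_iff_leftLim_eq.2 hleft),
      (cdf μ).right_continuous x⟩

noncomputable def quantile (μ : Measure ℝ) (s : ℝ) : ℝ := sInf {p | s ≤ μ.real (Iic p)}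

section Quantile

variable (μ : Measure ℝ) [IsProbabilityMeasure μ] [NullSingletonClass μ] {s : ℝ}

theorem measureReal_Iic_quantile (hs0 : 0 < s) (hs1 : s < 1) :
    μ.real (Iic (quantile μ s)) = s := by
  simp_rw [quantile, ← cdf_eq_real]
  obtain ⟨x, hx⟩ := ((tendsto_cdf_atBot μ).eventually (gt_mem_nhds hs0)).exists
  obtain ⟨y, hy⟩ := ((tendsto_cdf_atTop μ).eventually (lt_mem_nhds hs1)).exists
  exact (cdf μ).mono.apply_sInf_setOf_le (continuous_cdf μ) hx ⟨y, hy.le⟩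

theorem measureReal_Ici_quantile (hs0 : 0 < s) (hs1 : s < 1) :
    μ.real (Ici (quantile μ s)) = 1 - s := by
  rw [← compl_Iio, probReal_compl_eq_one_sub measurableSet_Iio, measureReal_congr Iio_ae_eq_Iic,
    measureReal_Iic_quantile μ hs0 hs1]

theorem lowerTailMean_quantile_one_le (hint : Integrable id μ) :
    lowerTailMean μ (quantile μ 1) ≤ upperTailMean μ (quantile μ 0) := by
  have hq0 : quantile μ 0 = 0 := by simp [quantile, measureReal_nonneg]
  rw [hq0]
  refine lowerTailMean_le_upperTailMean_zero μ hint ?_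
  by_cases hne : {p | 1 ≤ μ.real (Iic p)}.Nonempty
  · right
    obtain ⟨x, hx⟩ := ((tendsto_cdf_atBot μ).eventually (gt_mem_nhds one_pos)).exists
    simp_rw [quantile, ← cdf_eq_real] at hne ⊢
    exact le_antisymm (cdf_le_one μ _)
      ((cdf μ).mono.le_apply_sInf_setOf_le (continuous_cdf μ) hx hne)
  · left
    rw [quantile, not_nonempty_iff_eq_empty.1 hne, Real.sInf_empty]

end Quantile

section Mixture

variable {ι : Type*} [Fintype ι] {π : ι → ℝ} {Pk : ι → Measure ℝ}

theorem mixture_apply (s : Set ℝ) :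
    (∑ k, ENNReal.ofReal (π k) • Pk k) s = ∑ k, ENNReal.ofReal (π k) * Pk k s := by
  simp [Measure.finsetSum_apply]

theorem isProbabilityMeasure_mixture [∀ k, IsProbabilityMeasure (Pk k)] (hπ0 : ∀ k, 0 ≤ π k)
    (hπsum : ∑ k, π k = 1) : IsProbabilityMeasure (∑ k, ENNReal.ofReal (π k) • Pk k) := by
  constructor
  rw [mixture_apply]
  simp only [measure_univ, mul_one]
  rw [← ENNReal.ofReal_sum_of_nonneg fun k _ => hπ0 k, hπsum, ENNReal.ofReal_one]

theorem absolutelyContinuous_mixture {ν : Measure ℝ} (hac : ∀ k, Pk k ≪ ν) :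
    (∑ k, ENNReal.ofReal (π k) • Pk k) ≪ ν := fun s hs => by
  simp [mixture_apply, hac _ hs]

theorem integrable_mixture {f : ℝ → ℝ} (hf : ∀ k, Integrable f (Pk k)) :
    Integrable f (∑ k, ENNReal.ofReal (π k) • Pk k) :=
  integrable_finsetSum_measure.2 fun k _ => (hf k).smul_measure ENNReal.ofReal_ne_top

theorem smul_le_mixture {c : ℝ} (hπ : ∀ k, c ≤ π k) (k : ι) :
    ENNReal.ofReal c • Pk k ≤ ∑ j, ENNReal.ofReal (π j) • Pk j :=
  calc ENNReal.ofReal c • Pk k ≤ ENNReal.ofReal (π k) • Pk k := by gcongr; exact hπ k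
    _ ≤ ∑ j, ENNReal.ofReal (π j) • Pk j :=
      Finset.single_le_sum (f := fun j => ENNReal.ofReal (π j) • Pk j)
        (fun _ _ => Measure.zero_le _) (Finset.mem_univ k)

end Mixture

/-- mixture quantile bound.  For `P = Σ_k π_k P_k` with absolutely
continuous components and weights `π_k ≥ c > 0`, the gap of quantile-tail conditional
expectations upper-bounds `max_k E_{P_k}[V] − min_k E_{P_k}[V]`. -/
theorem stmt4 {ι : Type*} [Fintype ι] [Nonempty ι]
    (c : ℝ) (hc : 0 < c)
    (π : ι → ℝ) (hπ : ∀ k, c ≤ π k) (hπsum : ∑ k, π k = 1)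
    (Pk : ι → Measure ℝ) [∀ k, IsProbabilityMeasure (Pk k)]
    (hac : ∀ k, Pk k ≪ volume)
    (hint : ∀ k, Integrable id (Pk k))
    (P : Measure ℝ) (hP : P = ∑ k, ENNReal.ofReal (π k) • Pk k)
    (q : ℝ → ℝ)
    (hq : ∀ s, q s = sInf {p : ℝ | s ≤ (P (Set.Iic p)).toReal}) :
    (⨆ k, ∫ v, v ∂(Pk k)) - (⨅ k, ∫ v, v ∂(Pk k))
      ≤ (∫ v in Set.Ici (q (1 - c)), v ∂P) / (P (Set.Ici (q (1 - c)))).toReal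
        - (∫ v in Set.Iic (q c), v ∂P) / (P (Set.Iic (q c))).toReal := by
  have hπ0 : ∀ k, 0 ≤ π k := fun k => hc.le.trans (hπ k)
  have : IsProbabilityMeasure P := hP ▸ isProbabilityMeasure_mixture hπ0 hπsum
  have : NullSingletonClass P :=
    hP ▸ (absolutelyContinuous_mixture (π := π) hac).nullSingletonClass
  have hPint : Integrable id P := hP ▸ integrable_mixture hint
  have hle : ∀ k, ENNReal.ofReal c • Pk k ≤ P := hP ▸ smul_le_mixture hπ
  have hcard : (Fintype.card ι : ℝ) * c ≤ 1 := by
    simpa [hπsum] using Finset.card_nsmul_le_sum Finset.univ π c fun k _ => hπ k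
  change _ ≤ upperTailMean P (q (1 - c)) - lowerTailMean P (q c)
  rw [show q = quantile P from funext hq]
  have hc_le_one : c ≤ 1 := by
    have : (1 : ℝ) ≤ Fintype.card ι := by exact_mod_cast Fintype.card_pos
    nlinarith
  rcases hc_le_one.lt_or_eq with hc1 | rfl
  · refine sub_le_sub (ciSup_le fun k => integral_le_upperTailMean hc (hle k) ?_ hPint)
      (le_ciInf fun k =>
        lowerTailMean_le_integral hc (hle k) (measureReal_Iic_quantile P hc hc1) hPint)
    rw [measureReal_Ici_quantile P (by linarith) (by linarith), sub_sub_cancel]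
  · have : Subsingleton ι :=
      Fintype.card_le_one_iff_subsingleton.1 (by exact_mod_cast (mul_one (_ : ℝ)) ▸ hcard)
    have hsup_le_inf : (⨆ k, ∫ v, v ∂(Pk k)) ≤ ⨅ k, ∫ v, v ∂(Pk k) :=
      ciSup_le fun k => le_ciInf fun j => Subsingleton.elim k j ▸ le_rfl
    simp only [sub_self]
    linarith [lowerTailMean_quantile_one_le P hPint]
end

section
/- Let 𝒴 be a finite set and P_Y a distribution on 𝒴 with P_Y(y) > 0 for all y. Among all weight functions w: 𝒴 → ℝ₊ with Σ_y w(y)P_Y(y) = 1, the function w*(y) = 1/(|𝒴| P_Y(y)) minimizes sup over all distributions Q_Y on 𝒴 of TV(P^w_Y, Q_Y), and the minimal value equals (|𝒴|−1)/|𝒴|. -/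
/-!
The sum `∑ |a - q|` of two probability vectors equals `2 - 2 ∑ min (a, q)`, and some
coordinate has `a i ≤ q i`, so `TV(a, q) ≤ 1 - min a`, with equality for the point mass at
a minimiser of `a`. Every reweighting `w p` has a coordinate at most its average `1 / |𝒴|`,
and `w* p` is constantly `1 / |𝒴|`.
-/

/-- Worst-case total variation distance of the reweighted label distribution
`P^w_Y(y) = w(y)p(y)` against an arbitrary distribution `q` on a finite set. -/
noncomputable def worstTV {𝒴 : Type*} [Fintype 𝒴] (p w : 𝒴 → ℝ) : ℝ :=
  ⨆ q : {q : 𝒴 → ℝ // (∀ y, 0 ≤ q y) ∧ ∑ y, q y = 1},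
    (1 / 2) * ∑ y, |w y * p y - q.1 y|

open Finset

section Simplex

variable {ι : Type*} [Fintype ι]

lemma half_sum_abs_sub_eq_one_sub_sum_min {a q : ι → ℝ} (ha : ∑ i, a i = 1)
    (hq : ∑ i, q i = 1) :
    (1 / 2) * ∑ i, |a i - q i| = 1 - ∑ i, min (a i) (q i) := by
  have hpoint : ∀ i, |a i - q i| = a i + q i - 2 * min (a i) (q i) := fun i => by
    linarith [max_sub_min_eq_abs' (a i) (q i), min_add_max (a i) (q i)]
  simp only [hpoint, sum_sub_distrib, sum_add_distrib, ← mul_sum, ha, hq]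
  ring

lemma half_sum_abs_sub_single [DecidableEq ι] {a : ι → ℝ} (ha₀ : ∀ i, 0 ≤ a i)
    (ha : ∑ i, a i = 1) (j : ι) :
    (1 / 2) * ∑ i, |a i - (Pi.single j 1 : ι → ℝ) i| = 1 - a j := by
  have haj : a j ≤ 1 := ha ▸ single_le_sum (fun i _ => ha₀ i) (mem_univ j)
  have hmin : ∀ i, min (a i) ((Pi.single j 1 : ι → ℝ) i) = (Pi.single j (a j) : ι → ℝ) i := by
    intro i
    rcases eq_or_ne i j with rfl | hij
    · simpa using haj
    · simpa [hij] using ha₀ i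
  rw [half_sum_abs_sub_eq_one_sub_sum_min ha (by simp)]
  simp [hmin]

variable [Nonempty ι]

lemma half_sum_abs_sub_le_one_sub_inf' {a q : ι → ℝ} (ha₀ : ∀ i, 0 ≤ a i)
    (ha : ∑ i, a i = 1) (hq₀ : ∀ i, 0 ≤ q i) (hq : ∑ i, q i = 1) :
    (1 / 2) * ∑ i, |a i - q i| ≤ 1 - univ.inf' univ_nonempty a := by
  obtain ⟨j, -, hj⟩ := exists_le_of_sum_le univ_nonempty (ha.trans hq.symm).le
  rw [half_sum_abs_sub_eq_one_sub_sum_min ha hq]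
  have : univ.inf' univ_nonempty a ≤ ∑ i, min (a i) (q i) :=
    calc univ.inf' univ_nonempty a ≤ a j := inf'_le _ (mem_univ j)
      _ = min (a j) (q j) := (min_eq_left hj).symm
      _ ≤ ∑ i, min (a i) (q i) :=
        single_le_sum (fun i _ => le_min (ha₀ i) (hq₀ i)) (mem_univ j)
  linarith

lemma ciSup_half_sum_abs_sub_eq_one_sub_inf' {a : ι → ℝ} (ha₀ : ∀ i, 0 ≤ a i)
    (ha : ∑ i, a i = 1) :
    ⨆ q : {q : ι → ℝ // (∀ i, 0 ≤ q i) ∧ ∑ i, q i = 1}, (1 / 2) * ∑ i, |a i - q.1 i|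
      = 1 - univ.inf' univ_nonempty a := by
  classical
  obtain ⟨j, -, hj⟩ := exists_mem_eq_inf' (univ_nonempty (α := ι)) a
  let δ : {q : ι → ℝ // (∀ i, 0 ≤ q i) ∧ ∑ i, q i = 1} :=
    ⟨Pi.single j 1, fun i => by by_cases h : i = j <;> simp [h], by simp⟩
  have hle := fun q : {q : ι → ℝ // (∀ i, 0 ≤ q i) ∧ ∑ i, q i = 1} =>
    half_sum_abs_sub_le_one_sub_inf' ha₀ ha q.2.1 q.2.2
  have : Nonempty {q : ι → ℝ // (∀ i, 0 ≤ q i) ∧ ∑ i, q i = 1} := ⟨δ⟩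
  refine le_antisymm (ciSup_le hle) ?_
  calc 1 - univ.inf' univ_nonempty a = (1 / 2) * ∑ i, |a i - δ.1 i| := by
        rw [half_sum_abs_sub_single ha₀ ha, hj]
    _ ≤ _ := le_ciSup ⟨_, Set.forall_mem_range.2 hle⟩ δ

end Simplex

theorem stmt7_general {𝒴 : Type*} [Fintype 𝒴] [Nonempty 𝒴]
    (p : 𝒴 → ℝ) (hp : ∀ y, 0 < p y) :
    (∀ w : 𝒴 → ℝ, (∀ y, 0 ≤ w y) → (∑ y, w y * p y = 1) →
        worstTV p (fun y => 1 / (Fintype.card 𝒴 * p y)) ≤ worstTV p w)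
    ∧ worstTV p (fun y => 1 / (Fintype.card 𝒴 * p y))
        = ((Fintype.card 𝒴 : ℝ) - 1) / Fintype.card 𝒴 := by
  set n : ℝ := (Fintype.card 𝒴 : ℝ)
  have hn : 0 < n := Nat.cast_pos.2 Fintype.card_pos
  have hstar : ∀ y, 1 / (n * p y) * p y = 1 / n := fun y => by
    field_simp [(hp y).ne']
  have hsum_const : ∑ _y : 𝒴, 1 / n = 1 := by
    simp [n, hn.ne']
  have hval : worstTV p (fun y => 1 / (n * p y)) = 1 - 1 / n := by
    rw [worstTV, ciSup_half_sum_abs_sub_eq_one_sub_inf'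
      (fun y => by rw [hstar]; positivity) (by simp only [hstar, hsum_const])]
    simp only [hstar, inf'_const]
  refine ⟨fun w hw hwsum => ?_, by rw [hval]; field_simp⟩
  obtain ⟨j, -, hj⟩ := exists_le_of_sum_le univ_nonempty (hwsum.trans hsum_const.symm).le
  rw [hval, worstTV, ciSup_half_sum_abs_sub_eq_one_sub_inf'
    (fun y => mul_nonneg (hw y) (hp y).le) hwsum]
  linarith [inf'_le (fun y => w y * p y) (mem_univ j)]

/-- `w*(y) = 1/(|𝒴| P_Y(y))` minimizes the worst-case total variation
distance `sup_Q TV(P^w_Y, Q)` over all admissible weights `w`, and the minimal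
value equals `(|𝒴|−1)/|𝒴|`. -/
theorem stmt7 {𝒴 : Type*} [Fintype 𝒴] [Nonempty 𝒴]
    (p : 𝒴 → ℝ) (hp : ∀ y, 0 < p y) (hpsum : ∑ y, p y = 1) :
    (∀ w : 𝒴 → ℝ, (∀ y, 0 ≤ w y) → (∑ y, w y * p y = 1) →
        worstTV p (fun y => 1 / (Fintype.card 𝒴 * p y)) ≤ worstTV p w)
    ∧ worstTV p (fun y => 1 / (Fintype.card 𝒴 * p y))
        = ((Fintype.card 𝒴 : ℝ) - 1) / Fintype.card 𝒴 :=
  stmt7_general p hp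
end
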